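/- The function τ ↦ ρ(2M + τ²) + (1−ρ)(2^{1−M}/Γ(M)) ∫_τ^∞ (u−τ)² u^{2M−1} e^{−u²/2} du, defined for τ ≥ 0 with 0 < ρ < 1 and M ≥ 1, attains its infimum at a unique point τ* > 0, which is characterized by the stationarity equation (2^{1−M}/Γ(M)) ∫_{τ*}^∞ (u/τ* − 1) u^{2M−1} e^{−u²/2} du = ρ/(1−ρ). -/

import Mathlib

/-- The objective `τ ↦ ρ(2M + τ²) + (1−ρ)(2^{1−M}/Γ(M)) ∫_τ^∞ (u−τ)² u^{2M−1} e^{−u²/2} du`. -/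
noncomputable def Fobj (ρ : ℝ) (M : ℕ) (τ : ℝ) : ℝ :=
  ρ * (2 * M + τ ^ 2) +
    (1 - ρ) * ((2 : ℝ) ^ ((1 : ℝ) - M) / Real.Gamma M) *
      ∫ u in Set.Ioi τ, (u - τ) ^ 2 * u ^ (2 * M - 1) * Real.exp (-u ^ 2 / 2)

/-- The left-hand side of the stationarity equation
`(2^{1−M}/Γ(M)) ∫_τ^∞ (u/τ − 1) u^{2M−1} e^{−u²/2} du`. -/
noncomputable def Gstat (M : ℕ) (τ : ℝ) : ℝ :=
  ((2 : ℝ) ^ ((1 : ℝ) - M) / Real.Gamma M) *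
    ∫ u in Set.Ioi τ, (u / τ - 1) * u ^ (2 * M - 1) * Real.exp (-u ^ 2 / 2)

open MeasureTheory Set Real Filter


noncomputable def gkern (k : ℕ) (u : ℝ) : ℝ := u ^ k * Real.exp (-u ^ 2 / 2)

lemma gkern_cont (k : ℕ) : Continuous (gkern k) := by
  unfold gkern; fun_prop

lemma gkern_integrable (k : ℕ) : Integrable (gkern k) := by
  have h := integrable_rpow_mul_exp_neg_mul_sq (b := 1/2) (by norm_num) (s := (k : ℝ))
    (lt_of_lt_of_le neg_one_lt_zero (Nat.cast_nonneg k))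
  simp_rw [Real.rpow_natCast] at h
  have : (fun u : ℝ => u ^ k * Real.exp (-(1/2) * u ^ 2)) = gkern k := by
    funext u; unfold gkern; ring_nf
  rwa [this] at h

lemma gkern_nonneg (k : ℕ) {u : ℝ} (hu : 0 ≤ u) : 0 ≤ gkern k u := by
  unfold gkern; positivity

lemma gkern_pos (k : ℕ) {u : ℝ} (hu : 0 < u) : 0 < gkern k u := by
  unfold gkern; positivity

noncomputable def Jmom (k : ℕ) (τ : ℝ) : ℝ := ∫ u in Set.Ioi τ, gkern k u

lemma Jmom_split (k : ℕ) {a t : ℝ} (h : a ≤ t) :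
    Jmom k a = (∫ u in a..t, gkern k u) + Jmom k t := by
  have hIoc : IntegrableOn (gkern k) (Set.Ioc a t) := (gkern_integrable k).integrableOn
  have hIoi : IntegrableOn (gkern k) (Set.Ioi t) := (gkern_integrable k).integrableOn
  rw [Jmom, ← Set.Ioc_union_Ioi_eq_Ioi h,
    setIntegral_union (Set.Ioc_disjoint_Ioi le_rfl) measurableSet_Ioi hIoc hIoi,
    intervalIntegral.integral_of_le h]
  rfl

lemma Jmom_hasDerivAt (k : ℕ) (τ : ℝ) : HasDerivAt (Jmom k) (-(gkern k τ)) τ := by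
  set a : ℝ := τ - 1 with ha
  have haτ : a < τ := by simp [ha]
  have hev : (fun t => Jmom k a - ∫ u in a..t, gkern k u) =ᶠ[nhds τ] Jmom k := by
    filter_upwards [Ioi_mem_nhds haτ] with t ht
    rw [Jmom_split k (le_of_lt ht)]; ring
  have h1 : HasDerivAt (fun t => Jmom k a - ∫ u in a..t, gkern k u) (-(gkern k τ)) τ := by
    have h2 : HasDerivAt (fun t => ∫ u in a..t, gkern k u) (gkern k τ) τ :=
      intervalIntegral.integral_hasDerivAt_right
        ((gkern_integrable k).intervalIntegrable)
        ((gkern_cont k).stronglyMeasurable.stronglyMeasurableAtFilter)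
        (gkern_cont k).continuousAt
    exact ((hasDerivAt_const τ (Jmom k a)).sub h2).congr_deriv (by simp)
  exact h1.congr_of_eventuallyEq hev.symm

lemma Jmom_nonneg (k : ℕ) {τ : ℝ} (h : 0 ≤ τ) : 0 ≤ Jmom k τ :=
  setIntegral_nonneg measurableSet_Ioi fun u hu => gkern_nonneg k (h.trans (le_of_lt hu))

lemma Jmom_pos (k : ℕ) {τ : ℝ} (h : 0 ≤ τ) : 0 < Jmom k τ := by
  rw [Jmom, setIntegral_pos_iff_support_of_nonneg_ae]
  · have hs : Set.Ioi τ ⊆ Function.support (gkern k) ∩ Set.Ioi τ := by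
      intro u hu
      exact ⟨ne_of_gt (gkern_pos k (lt_of_le_of_lt h hu)), hu⟩
    calc (0 : ENNReal) < volume (Set.Ioi τ) := by simp [Real.volume_Ioi]
    _ ≤ volume (Function.support (gkern k) ∩ Set.Ioi τ) := measure_mono hs
  · filter_upwards [ae_restrict_mem measurableSet_Ioi] with u hu
    exact gkern_nonneg k (h.trans (le_of_lt hu))
  · exact (gkern_integrable k).integrableOn

lemma Jmom_anti (k : ℕ) {a b : ℝ} (h0 : 0 ≤ a) (h : a ≤ b) : Jmom k b ≤ Jmom k a := by
  apply setIntegral_mono_set (gkern_integrable k).integrableOn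
  · filter_upwards [ae_restrict_mem measurableSet_Ioi] with u hu
    exact gkern_nonneg k (h0.trans (le_of_lt hu))
  · exact (Set.Ioi_subset_Ioi h).eventuallyLE

lemma Fobj_eq (ρ : ℝ) (M : ℕ) (τ : ℝ) :
    Fobj ρ M τ = ρ * (2 * M + τ ^ 2) +
      (1 - ρ) * ((2 : ℝ) ^ ((1 : ℝ) - M) / Real.Gamma M) *
        (Jmom (2 * M - 1 + 2) τ - 2 * τ * Jmom (2 * M - 1 + 1) τ + τ ^ 2 * Jmom (2 * M - 1) τ) := by
  set n := 2 * M - 1 with hn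
  have hι : (fun u : ℝ => (u - τ) ^ 2 * u ^ n * Real.exp (-u ^ 2 / 2)) =
      fun u => gkern (n + 2) u - 2 * τ * gkern (n + 1) u + τ ^ 2 * gkern n u := by
    funext u; unfold gkern; ring
  have h2 : Integrable (fun u => 2 * τ * gkern (n + 1) u) := (gkern_integrable (n+1)).const_mul _
  have h3 : Integrable (fun u => τ ^ 2 * gkern n u) := (gkern_integrable n).const_mul _
  have h23 : Integrable (fun u => gkern (n + 2) u - 2 * τ * gkern (n + 1) u) :=
    (gkern_integrable (n+2)).sub h2
  rw [Fobj, hι]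
  rw [integral_add (h23.integrableOn) (h3.integrableOn),
    integral_sub ((gkern_integrable (n+2)).integrableOn) (h2.integrableOn),
    integral_const_mul, integral_const_mul]
  rfl

lemma Gstat_aux (M : ℕ) {τ : ℝ} (hτ : τ ≠ 0) (σ : ℝ) :
    (∫ u in Set.Ioi σ, (u / τ - 1) * u ^ (2 * M - 1) * Real.exp (-u ^ 2 / 2)) =
      τ⁻¹ * Jmom (2 * M - 1 + 1) σ - Jmom (2 * M - 1) σ := by
  set n := 2 * M - 1 with hn
  have hι : (fun u : ℝ => (u / τ - 1) * u ^ n * Real.exp (-u ^ 2 / 2)) =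
      fun u => τ⁻¹ * gkern (n + 1) u - gkern n u := by
    funext u; unfold gkern; field_simp; ring
  rw [hι, integral_sub (((gkern_integrable (n+1)).const_mul _).integrableOn)
      ((gkern_integrable n).integrableOn), integral_const_mul]
  rfl

lemma Gstat_eq (M : ℕ) {τ : ℝ} (hτ : τ ≠ 0) :
    Gstat M τ = ((2 : ℝ) ^ ((1 : ℝ) - M) / Real.Gamma M) *
      (τ⁻¹ * Jmom (2 * M - 1 + 1) τ - Jmom (2 * M - 1) τ) := by
  rw [Gstat, Gstat_aux M hτ τ]

lemma Fobj_hasDerivAt (ρ : ℝ) (M : ℕ) (τ : ℝ) :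
    HasDerivAt (Fobj ρ M)
      (2 * ρ * τ + (1 - ρ) * ((2 : ℝ) ^ ((1 : ℝ) - M) / Real.Gamma M) *
        (2 * τ * Jmom (2 * M - 1) τ - 2 * Jmom (2 * M - 1 + 1) τ)) τ := by
  set n := 2 * M - 1 with hn
  set c := (2 : ℝ) ^ ((1 : ℝ) - M) / Real.Gamma M with hc
  have hF : Fobj ρ M = fun t => ρ * (2 * M + t ^ 2) + (1 - ρ) * c *
      (Jmom (n + 2) t - 2 * t * Jmom (n + 1) t + t ^ 2 * Jmom n t) := funext (Fobj_eq ρ M)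
  rw [hF]
  have hsq : ∀ t : ℝ, HasDerivAt (fun t : ℝ => t ^ 2) (2 * t) t := fun t => by
    simpa using hasDerivAt_pow 2 t
  have h1 : HasDerivAt (fun t : ℝ => ρ * (2 * M + t ^ 2)) (ρ * (0 + 2 * τ)) τ :=
    ((hasDerivAt_const τ (2 * (M : ℝ))).add (hsq τ)).const_mul ρ
  have h2 := Jmom_hasDerivAt (n + 2) τ
  have h3 : HasDerivAt (fun t : ℝ => 2 * t * Jmom (n + 1) t)
      (2 * 1 * Jmom (n + 1) τ + 2 * τ * -(gkern (n + 1) τ)) τ :=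
    ((hasDerivAt_id τ).const_mul 2).mul (Jmom_hasDerivAt (n + 1) τ)
  have h4 : HasDerivAt (fun t : ℝ => t ^ 2 * Jmom n t)
      (2 * τ * Jmom n τ + τ ^ 2 * -(gkern n τ)) τ := (hsq τ).mul (Jmom_hasDerivAt n τ)
  have total := h1.add (((h2.sub h3).add h4).const_mul ((1 - ρ) * c))
  have hder : ρ * (0 + 2 * τ) + (1 - ρ) * c *
      (-(gkern (n + 2) τ) - (2 * 1 * Jmom (n + 1) τ + 2 * τ * -(gkern (n + 1) τ)) +
        (2 * τ * Jmom n τ + τ ^ 2 * -(gkern n τ))) =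
      2 * ρ * τ + (1 - ρ) * c * (2 * τ * Jmom n τ - 2 * Jmom (n + 1) τ) := by
    unfold gkern; ring
  rw [← hder]
  exact total

lemma Gstat_hasDerivAt (M : ℕ) {τ : ℝ} (hτ : 0 < τ) :
    HasDerivAt (Gstat M)
      (-(((2 : ℝ) ^ ((1 : ℝ) - M) / Real.Gamma M) * (τ ^ 2)⁻¹ * Jmom (2 * M - 1 + 1) τ)) τ := by
  set n := 2 * M - 1 with hn
  set c := (2 : ℝ) ^ ((1 : ℝ) - M) / Real.Gamma M with hc
  have hinv : HasDerivAt (fun x : ℝ => x⁻¹) (-(τ ^ 2)⁻¹) τ := hasDerivAt_inv hτ.ne'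
  have hg : HasDerivAt (fun t : ℝ => c * (t⁻¹ * Jmom (n + 1) t - Jmom n t))
      (c * ((-(τ ^ 2)⁻¹ * Jmom (n + 1) τ + τ⁻¹ * -(gkern (n + 1) τ)) - -(gkern n τ))) τ :=
    ((hinv.mul (Jmom_hasDerivAt (n + 1) τ)).sub (Jmom_hasDerivAt n τ)).const_mul c
  have hder : c * ((-(τ ^ 2)⁻¹ * Jmom (n + 1) τ + τ⁻¹ * -(gkern (n + 1) τ)) - -(gkern n τ)) =
      -(c * (τ ^ 2)⁻¹ * Jmom (n + 1) τ) := by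
    have hk : τ⁻¹ * gkern (n + 1) τ = gkern n τ := by
      unfold gkern
      rw [pow_succ]
      field_simp
    rw [← hk]; ring
  rw [← hder]
  have hev : Gstat M =ᶠ[nhds τ] fun t : ℝ => c * (t⁻¹ * Jmom (n + 1) t - Jmom n t) := by
    filter_upwards [IsOpen.mem_nhds isOpen_compl_singleton
      (by simpa using hτ.ne' : τ ∈ ({0}ᶜ : Set ℝ))] with t ht
    exact Gstat_eq M (by simpa using ht)
  exact hg.congr_of_eventuallyEq hev

lemma cconst_pos {M : ℕ} (hM : 1 ≤ M) : 0 < (2 : ℝ) ^ ((1 : ℝ) - M) / Real.Gamma M :=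
  div_pos (Real.rpow_pos_of_pos two_pos _)
    (Real.Gamma_pos_of_pos (by exact_mod_cast hM : (0 : ℝ) < M))

lemma Gstat_strictAntiOn (M : ℕ) (hM : 1 ≤ M) : StrictAntiOn (Gstat M) (Set.Ioi 0) := by
  apply strictAntiOn_of_deriv_neg (convex_Ioi 0)
  · intro τ hτ
    exact ((Gstat_hasDerivAt M (Set.mem_Ioi.mp hτ)).continuousAt).continuousWithinAt
  · intro τ hτ
    rw [interior_Ioi] at hτ
    have hτ0 : 0 < τ := Set.mem_Ioi.mp hτ
    rw [(Gstat_hasDerivAt M hτ0).deriv]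
    have h1 : 0 < Jmom (2 * M - 1 + 1) τ := Jmom_pos _ hτ0.le
    have h2 := cconst_pos hM
    have h3 : 0 < (τ ^ 2)⁻¹ := by positivity
    have := mul_pos (mul_pos h2 h3) h1
    linarith

lemma Fobj_hasDerivAt' (ρ : ℝ) (M : ℕ) {τ : ℝ} (hτ : τ ≠ 0) :
    HasDerivAt (Fobj ρ M) (2 * τ * (ρ - (1 - ρ) * Gstat M τ)) τ := by
  have h := Fobj_hasDerivAt ρ M τ
  have heq : 2 * ρ * τ + (1 - ρ) * ((2 : ℝ) ^ ((1 : ℝ) - M) / Real.Gamma M) *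
      (2 * τ * Jmom (2 * M - 1) τ - 2 * Jmom (2 * M - 1 + 1) τ) =
      2 * τ * (ρ - (1 - ρ) * Gstat M τ) := by
    rw [Gstat_eq M hτ]
    have hττ : τ * τ⁻¹ = 1 := mul_inv_cancel₀ hτ
    linear_combination 2 * (1 - ρ) * ((2 : ℝ) ^ ((1 : ℝ) - M) / Real.Gamma M) *
      Jmom (2 * M - 1 + 1) τ * hττ
  rwa [heq] at h

lemma Gstat_ub (M : ℕ) (hM : 1 ≤ M) {τ : ℝ} (h1τ : 1 ≤ τ) :
    Gstat M τ ≤ (2 : ℝ) ^ ((1 : ℝ) - M) / Real.Gamma M * Jmom (2 * M - 1 + 1) 1 / τ := by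
  have hτ0 : (0 : ℝ) < τ := lt_of_lt_of_le one_pos h1τ
  rw [Gstat_eq M hτ0.ne']
  have h1 : Jmom (2 * M - 1 + 1) τ ≤ Jmom (2 * M - 1 + 1) 1 := Jmom_anti _ zero_le_one h1τ
  have h2 : 0 ≤ Jmom (2 * M - 1) τ := Jmom_nonneg _ hτ0.le
  have h3 := cconst_pos hM
  have h4 : 0 < τ⁻¹ := by positivity
  have h5 : τ⁻¹ * Jmom (2 * M - 1 + 1) τ - Jmom (2 * M - 1) τ ≤
      τ⁻¹ * Jmom (2 * M - 1 + 1) 1 := by nlinarith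
  calc (2 : ℝ) ^ ((1 : ℝ) - M) / Real.Gamma M *
        (τ⁻¹ * Jmom (2 * M - 1 + 1) τ - Jmom (2 * M - 1) τ)
      ≤ (2 : ℝ) ^ ((1 : ℝ) - M) / Real.Gamma M * (τ⁻¹ * Jmom (2 * M - 1 + 1) 1) :=
        mul_le_mul_of_nonneg_left h5 h3.le
    _ = (2 : ℝ) ^ ((1 : ℝ) - M) / Real.Gamma M * Jmom (2 * M - 1 + 1) 1 / τ := by
        field_simp

lemma Gstat_lb (M : ℕ) (hM : 1 ≤ M) {τ : ℝ} (hτ0 : 0 < τ) (hτ1 : τ ≤ 1) :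
    (2 : ℝ) ^ ((1 : ℝ) - M) / Real.Gamma M *
      (τ⁻¹ * Jmom (2 * M - 1 + 1) 1 - Jmom (2 * M - 1) 1) ≤ Gstat M τ := by
  rw [Gstat, ← Gstat_aux M hτ0.ne' 1]
  apply mul_le_mul_of_nonneg_left _ (cconst_pos hM).le
  have hι : (fun u : ℝ => (u / τ - 1) * u ^ (2 * M - 1) * Real.exp (-u ^ 2 / 2)) =
      fun u => τ⁻¹ * gkern (2 * M - 1 + 1) u - gkern (2 * M - 1) u := by
    funext u; unfold gkern; field_simp; ring
  apply setIntegral_mono_set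
  · rw [show (fun u : ℝ => (u / τ - 1) * u ^ (2 * M - 1) * Real.exp (-u ^ 2 / 2)) =
        fun u => τ⁻¹ * gkern (2 * M - 1 + 1) u - gkern (2 * M - 1) u from hι]
    exact (((gkern_integrable _).const_mul _).sub (gkern_integrable _)).integrableOn
  · filter_upwards [ae_restrict_mem measurableSet_Ioi] with u hu
    have hu0 : 0 < u := hτ0.trans hu
    have hdiv : 1 ≤ u / τ := (one_le_div hτ0).mpr (le_of_lt hu)
    exact mul_nonneg (mul_nonneg (by linarith) (pow_nonneg hu0.le _)) (Real.exp_pos _).le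
  · exact (Set.Ioi_subset_Ioi hτ1).eventuallyLE


set_option maxHeartbeats 1000000 in
/-- For `0 < ρ < 1` and `M ≥ 1`, the function `Fobj ρ M` attains its
infimum over `τ ≥ 0` at a unique point `τ* > 0`, which is the unique positive
solution of the stationarity equation `Gstat M τ* = ρ/(1−ρ)`. -/
theorem unique_minimizer_and_stationarity (ρ : ℝ) (hρ₀ : 0 < ρ) (hρ₁ : ρ < 1)
    (M : ℕ) (hM : 1 ≤ M) :
    ∃ τs : ℝ, 0 < τs ∧
      (∀ τ : ℝ, 0 ≤ τ → Fobj ρ M τs ≤ Fobj ρ M τ) ∧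
      Gstat M τs = ρ / (1 - ρ) ∧
      (∀ τ : ℝ, 0 ≤ τ → (∀ σ : ℝ, 0 ≤ σ → Fobj ρ M τ ≤ Fobj ρ M σ) → τ = τs) ∧
      (∀ τ : ℝ, 0 < τ → Gstat M τ = ρ / (1 - ρ) → τ = τs) := by
  have hρ' : (0 : ℝ) < 1 - ρ := by linarith
  have hc0 := cconst_pos hM
  have hK1 : 0 < Jmom (2 * M - 1 + 1) 1 := Jmom_pos _ zero_le_one
  have hK0 : 0 < Jmom (2 * M - 1) 1 := Jmom_pos _ zero_le_one
  set C := (2 : ℝ) ^ ((1 : ℝ) - M) / Real.Gamma M with hC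
  set K1 := Jmom (2 * M - 1 + 1) 1 with hK1def
  set K0 := Jmom (2 * M - 1) 1 with hK0def
  set r := ρ / (1 - ρ) with hrdef
  have hr0 : 0 < r := div_pos hρ₀ hρ'
  have hrρ : (1 - ρ) * r = ρ := by rw [hrdef]; field_simp
  -- lower endpoint
  have hden : 0 < r + C * K0 := by positivity
  set β := C * K1 / (r + C * K0) with hβdef
  have hβ0 : 0 < β := div_pos (mul_pos hc0 hK1) hden
  set τa := min 1 β / 2 with hτadef
  have hτa0 : 0 < τa := by rw [hτadef]; positivity
  have hτa1 : τa ≤ 1 := by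
    have h := min_le_left 1 β; rw [hτadef]; linarith
  have hτaβ : τa < β := by
    have h := min_le_right 1 β; rw [hτadef]; linarith
  have hGa : r < Gstat M τa := by
    have h1 := Gstat_lb M hM hτa0 hτa1
    rw [← hC, ← hK1def, ← hK0def] at h1
    have h2 : τa * (r + C * K0) < C * K1 := by
      calc τa * (r + C * K0) < β * (r + C * K0) := by nlinarith
        _ = C * K1 := by rw [hβdef]; field_simp
    have h4 : τa * (τa⁻¹ * (C * K1)) = C * K1 := by field_simp
    have h3 : r + C * K0 < τa⁻¹ * (C * K1) :=
      lt_of_mul_lt_mul_left (h2.trans_eq h4.symm) hτa0.le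
    nlinarith
  -- upper endpoint
  set τb := max 1 (2 * C * K1 / r) with hτbdef
  have hτb1 : (1 : ℝ) ≤ τb := le_max_left _ _
  have hGb : Gstat M τb < r := by
    have h1 := Gstat_ub M hM hτb1
    rw [← hC, ← hK1def] at h1
    have h2 : C * K1 / τb ≤ C * K1 / (2 * C * K1 / r) := by
      gcongr
      · exact le_max_right _ _
    have h3 : C * K1 / (2 * C * K1 / r) = r / 2 := by
      field_simp
    rw [h3] at h2
    linarith
  have hab : τa ≤ τb := hτa1.trans hτb1
  have hcont : ContinuousOn (Gstat M) (Set.Icc τa τb) := fun τ hτ =>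
    ((Gstat_hasDerivAt M (lt_of_lt_of_le hτa0 hτ.1)).continuousAt).continuousWithinAt
  obtain ⟨τs, hτsmem, hGτs⟩ :=
    intermediate_value_Icc' hab hcont ⟨hGb.le, hGa.le⟩
  have hτs0 : 0 < τs := lt_of_lt_of_le hτa0 hτsmem.1
  have hanti := Gstat_strictAntiOn M hM
  -- derivative signs
  have hDneg : ∀ τ ∈ Set.Ioo (0 : ℝ) τs, deriv (Fobj ρ M) τ < 0 := by
    intro τ hτ
    rw [(Fobj_hasDerivAt' ρ M hτ.1.ne').deriv]
    have hG : Gstat M τs < Gstat M τ :=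
      hanti (Set.mem_Ioi.mpr hτ.1) (Set.mem_Ioi.mpr hτs0) hτ.2
    rw [hGτs] at hG
    have hneg : ρ - (1 - ρ) * Gstat M τ < 0 := by nlinarith
    exact mul_neg_of_pos_of_neg (by nlinarith [hτ.1]) hneg
  have hDpos : ∀ τ ∈ Set.Ioi τs, 0 < deriv (Fobj ρ M) τ := by
    intro τ hτ
    rw [Set.mem_Ioi] at hτ
    have hτ0 : 0 < τ := hτs0.trans hτ
    rw [(Fobj_hasDerivAt' ρ M hτ0.ne').deriv]
    have hG : Gstat M τ < Gstat M τs :=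
      hanti (Set.mem_Ioi.mpr hτs0) (Set.mem_Ioi.mpr hτ0) hτ
    rw [hGτs] at hG
    have hpos : 0 < ρ - (1 - ρ) * Gstat M τ := by nlinarith
    exact mul_pos (by nlinarith) hpos
  have hFcont : ∀ s : Set ℝ, ContinuousOn (Fobj ρ M) s := fun s τ _ =>
    (Fobj_hasDerivAt ρ M τ).continuousAt.continuousWithinAt
  have hFanti : StrictAntiOn (Fobj ρ M) (Set.Icc 0 τs) :=
    strictAntiOn_of_deriv_neg (convex_Icc _ _) (hFcont _)
      (by rw [interior_Icc]; exact hDneg)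
  have hFmono : StrictMonoOn (Fobj ρ M) (Set.Ici τs) :=
    strictMonoOn_of_deriv_pos (convex_Ici _) (hFcont _)
      (by rw [interior_Ici]; exact hDpos)
  have hmin : ∀ τ : ℝ, 0 ≤ τ → Fobj ρ M τs ≤ Fobj ρ M τ := by
    intro τ h0
    rcases lt_trichotomy τ τs with h | h | h
    · exact (hFanti ⟨h0, h.le⟩ ⟨hτs0.le, le_refl _⟩ h).le
    · rw [h]
    · exact (hFmono (Set.self_mem_Ici) (Set.mem_Ici.mpr h.le) h).le
  refine ⟨τs, hτs0, hmin, hGτs, ?_, ?_⟩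
  · intro τ h0 hminτ
    by_contra hne
    have hlt : Fobj ρ M τs < Fobj ρ M τ := by
      rcases lt_or_gt_of_ne hne with h | h
      · exact hFanti ⟨h0, h.le⟩ ⟨hτs0.le, le_refl _⟩ h
      · exact hFmono (Set.self_mem_Ici) (Set.mem_Ici.mpr h.le) h
    have := hminτ τs hτs0.le
    linarith
  · intro τ hτ0 hGτ
    exact hanti.injOn (Set.mem_Ioi.mpr hτ0) (Set.mem_Ioi.mpr hτs0) (by rw [hGτ, hGτs])
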